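/- arXiv:2402.17526 — 9 statements merged into one kernel-verified Lean document; each statement's English description precedes it below -/
import Mathlib

section
/- Let λ, β, π, ρ ∈ (0,1) and ξ, γ ∈ [0,1]. Define X := βρλ + (1−λ), Y := β(1−ρλ) + (1−β)(1−ξλ), and the posterior Π := πX / (πX + (1−π)[γX + (1−γ)(1−Y)]). Then Π > π if and only if γ < 1 and ξ < (1−λ)/(λ(1−β)). Moreover, (1−λ)/(λ(1−β)) < 1 if and only if λ > 1/(2−β). -/
/-- Informativeness of the voter's posterior in a PECB. -/
theorem stmt1 (lam beta p rho xi gamma X Y Pi : ℝ)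
    (hlam : lam ∈ Set.Ioo (0:ℝ) 1) (hbeta : beta ∈ Set.Ioo (0:ℝ) 1)
    (hp : p ∈ Set.Ioo (0:ℝ) 1) (hrho : rho ∈ Set.Ioo (0:ℝ) 1)
    (hxi : xi ∈ Set.Icc (0:ℝ) 1) (hgamma : gamma ∈ Set.Icc (0:ℝ) 1)
    (hX : X = beta * rho * lam + (1 - lam))
    (hY : Y = beta * (1 - rho * lam) + (1 - beta) * (1 - xi * lam))
    (hPi : Pi = p * X / (p * X + (1 - p) * (gamma * X + (1 - gamma) * (1 - Y)))) :
    (Pi > p ↔ gamma < 1 ∧ xi < (1 - lam) / (lam * (1 - beta))) ∧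
    ((1 - lam) / (lam * (1 - beta)) < 1 ↔ lam > 1 / (2 - beta)) := by
  obtain ⟨hl0, hl1⟩ := hlam
  obtain ⟨hb0, hb1⟩ := hbeta
  obtain ⟨hp0, hp1⟩ := hp
  obtain ⟨hr0, hr1⟩ := hrho
  obtain ⟨hx0, hx1⟩ := hxi
  obtain ⟨hg0, hg1⟩ := hgamma
  have hlb : 0 < lam * (1 - beta) := by nlinarith
  have hXpos : 0 < X := by
    rw [hX]; nlinarith [mul_pos (mul_pos hb0 hr0) hl0]
  have h1Y : 0 ≤ 1 - Y := by
    rw [hY]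
    nlinarith [mul_nonneg (mul_nonneg hb0.le hr0.le) hl0.le,
      mul_nonneg (mul_nonneg (by linarith : (0:ℝ) ≤ 1 - beta) hx0) hl0.le]
  have hkeyeq : X - (1 - Y) = (1 - lam) - xi * (lam * (1 - beta)) := by
    rw [hX, hY]; ring
  have hZ : 0 ≤ gamma * X + (1 - gamma) * (1 - Y) := by
    have := mul_nonneg hg0 hXpos.le
    have := mul_nonneg (by linarith : (0:ℝ) ≤ 1 - gamma) h1Y
    linarith
  have hD : 0 < p * X + (1 - p) * (gamma * X + (1 - gamma) * (1 - Y)) := by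
    have := mul_pos hp0 hXpos
    have := mul_nonneg (by linarith : (0:ℝ) ≤ 1 - p) hZ
    linarith
  constructor
  · rw [hPi, gt_iff_lt, lt_div_iff₀ hD]
    constructor
    · intro h
      have hDX : p * X + (1 - p) * (gamma * X + (1 - gamma) * (1 - Y)) < X :=
        (mul_lt_mul_iff_right₀ hp0).mp h
      have hZX : gamma * X + (1 - gamma) * (1 - Y) < X := by
        have h2 : (1 - p) * (gamma * X + (1 - gamma) * (1 - Y)) < (1 - p) * X := by
          linarith
        exact (mul_lt_mul_iff_right₀ (by linarith : (0:ℝ) < 1 - p)).mp h2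
      have hkey : (1 - gamma) * (1 - Y) < (1 - gamma) * X := by nlinarith
      have hg : gamma < 1 := by
        by_contra hge
        push_neg at hge
        have : gamma = 1 := le_antisymm hg1 hge
        rw [this] at hkey; simp at hkey
      have hXY : 1 - Y < X :=
        (mul_lt_mul_iff_right₀ (by linarith : (0:ℝ) < 1 - gamma)).mp hkey
      refine ⟨hg, ?_⟩
      rw [lt_div_iff₀ hlb]
      linarith
    · rintro ⟨hg, hxi'⟩
      rw [lt_div_iff₀ hlb] at hxi'
      have hXY : 1 - Y < X := by linarith
      have hZX : gamma * X + (1 - gamma) * (1 - Y) < X := by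
        nlinarith [mul_lt_mul_of_pos_left hXY (by linarith : (0:ℝ) < 1 - gamma)]
      have hDX : p * X + (1 - p) * (gamma * X + (1 - gamma) * (1 - Y)) < X := by
        nlinarith [mul_lt_mul_of_pos_left hZX (by linarith : (0:ℝ) < 1 - p)]
      exact (mul_lt_mul_iff_right₀ hp0).mpr hDX
  · have h2b : 0 < 2 - beta := by linarith
    rw [div_lt_one hlb, gt_iff_lt, div_lt_iff₀ h2b]
    constructor <;> intro h <;> nlinarith
end

section
/- Let β, λ, ρ, π, δ ∈ (0,1), ξ ∈ [0,1], E ≥ 0, and v_xx > v_yx, v_yy, v_xy reals. With the continuation values V_gg := ρ·v_xx + (1−ρ)·v_yy + E, V_gb := V_gg − ρλ(v_xx − v_yx), U_gg := ρ[π+(1−π)λ]·v_xx + (1−ρ)·v_yy + (1−π)(1−λ)ρ·v_yx, and U_gb := U_gg − ρλ(v_xx − v_yx), define U_x := β[v_xx + δ·V_gg] + (1−β)[λ(v_yx + δ·U_gb) + (1−λ)(v_xx + δ·V_gb)] and U_y := β[λ(v_xx + δ·V_gg) + (1−λ)(v_yx + δ·U_gg)] + (1−β){ξ[λ(v_xx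 + δ·V_gb) + (1−λ)(v_yx + δ·U_gb)] + (1−ξ)(v_yx + δ·U_gb)}. Then U_x ≥ U_y if and only if ξ ≤ (1−λ)/(λ(1−β)). -/
private lemma aux5 (a C U V : ℝ) (hC : 0 < C) (hk : U - V = a * C) :
    U ≥ V ↔ 0 ≤ a := by
  constructor
  · intro h
    by_contra hcon
    push_neg at hcon
    nlinarith [mul_pos (neg_pos.mpr hcon) hC]
  · intro h
    nlinarith [mul_nonneg h hC.le]

/-- Good politician's choice in state x in a PECB. -/
theorem stmt5 (beta lam rho p delta xi E vxx vyy vxy vyx Vgg Vgb Ugg Ugb Ux Uy : ℝ)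
    (hbeta : beta ∈ Set.Ioo (0:ℝ) 1) (hlam : lam ∈ Set.Ioo (0:ℝ) 1)
    (hrho : rho ∈ Set.Ioo (0:ℝ) 1) (hp : p ∈ Set.Ioo (0:ℝ) 1)
    (hdelta : delta ∈ Set.Ioo (0:ℝ) 1) (hxi : xi ∈ Set.Icc (0:ℝ) 1)
    (hE : 0 ≤ E) (hv : vxx > vyx)
    (hVgg : Vgg = rho * vxx + (1 - rho) * vyy + E)
    (hVgb : Vgb = Vgg - rho * lam * (vxx - vyx))
    (hUgg : Ugg = rho * (p + (1 - p) * lam) * vxx + (1 - rho) * vyy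
        + (1 - p) * (1 - lam) * rho * vyx)
    (hUgb : Ugb = Ugg - rho * lam * (vxx - vyx))
    (hUx : Ux = beta * (vxx + delta * Vgg)
        + (1 - beta) * (lam * (vyx + delta * Ugb) + (1 - lam) * (vxx + delta * Vgb)))
    (hUy : Uy = beta * (lam * (vxx + delta * Vgg) + (1 - lam) * (vyx + delta * Ugg))
        + (1 - beta) * (xi * (lam * (vxx + delta * Vgb) + (1 - lam) * (vyx + delta * Ugb))
            + (1 - xi) * (vyx + delta * Ugb))) :
    Ux ≥ Uy ↔ xi ≤ (1 - lam) / (lam * (1 - beta)) := by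
  obtain ⟨hb0, hb1⟩ := hbeta
  obtain ⟨hl0, hl1⟩ := hlam
  obtain ⟨hr0, hr1⟩ := hrho
  obtain ⟨hp0, hp1⟩ := hp
  obtain ⟨hd0, hd1⟩ := hdelta
  have hCpos : 0 < (vxx - vyx) + delta * (E + rho * (1 - p) * (1 - lam) * (vxx - vyx)) := by
    have h1 : 0 < vxx - vyx := by linarith
    have h2 : 0 ≤ rho * (1 - p) * (1 - lam) * (vxx - vyx) := by
      apply mul_nonneg
      apply mul_nonneg
      apply mul_nonneg <;> nlinarith
      all_goals nlinarith
    nlinarith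
  have hkey : Ux - Uy = ((1 - lam) - (1 - beta) * lam * xi)
      * ((vxx - vyx) + delta * (E + rho * (1 - p) * (1 - lam) * (vxx - vyx))) := by
    rw [hUx, hUy, hUgb, hVgb, hUgg, hVgg]; ring
  have hiff : Ux ≥ Uy ↔ 0 ≤ (1 - lam) - (1 - beta) * lam * xi :=
    aux5 _ _ _ _ hCpos hkey
  clear hkey hCpos hVgg hVgb hUgg hUgb hUx hUy
  have hden : 0 < lam * (1 - beta) := by nlinarith
  rw [hiff, le_div_iff₀ hden]
  constructor <;> intro h <;> nlinarith
end

section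
/- Let β, λ, ρ, π, δ ∈ (0,1), ξ ∈ [0,1] with ξ < (1−λ)/(λ(1−β)), E ∈ ℝ, and v_xx > v_yx, v_yy, v_xy reals. With continuation values V_gg := ρ·v_xx + (1−ρ)·v_yy + E, V_gb := V_gg − ρλ(v_xx − v_yx), U_gg := ρ[π+(1−π)λ]·v_xx + (1−ρ)·v_yy + (1−π)(1−λ)ρ·v_yx, U_gb := U_gg − ρλ(v_xx − v_yx), define U_x := β[λ(v_yy + δ·U_gg) + (1−λ)(v_xy + δ·V_gg)] + (1−β)[λ(v_yy + δ·U_gb) + (1−λ)(v_xy + δ·V_gb)] and U_y := β(v_yy + δ·U_gg) + (1−β){ξ[λ(v_xy + δ·V_gb) + (1−λ)(v_yy + δ·U_gb)] + (1−ξ)(v_yy + δ·U_gb)}. Then U_x ≥ U_y if and only if δE ≥ v_yy − v_xy − δρ(1−π)(1−λ)(v_xx − v_yx). -/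
/-- Good politician's pandering condition in state y in a PECB. -/
theorem stmt6 (beta lam rho p delta xi E vxx vyy vxy vyx Vgg Vgb Ugg Ugb Ux Uy : ℝ)
    (hbeta : beta ∈ Set.Ioo (0:ℝ) 1) (hlam : lam ∈ Set.Ioo (0:ℝ) 1)
    (hrho : rho ∈ Set.Ioo (0:ℝ) 1) (hp : p ∈ Set.Ioo (0:ℝ) 1)
    (hdelta : delta ∈ Set.Ioo (0:ℝ) 1) (hxi : xi ∈ Set.Icc (0:ℝ) 1)
    (hxiub : xi < (1 - lam) / (lam * (1 - beta))) (hv : vxx > vyx)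
    (hVgg : Vgg = rho * vxx + (1 - rho) * vyy + E)
    (hVgb : Vgb = Vgg - rho * lam * (vxx - vyx))
    (hUgg : Ugg = rho * (p + (1 - p) * lam) * vxx + (1 - rho) * vyy
        + (1 - p) * (1 - lam) * rho * vyx)
    (hUgb : Ugb = Ugg - rho * lam * (vxx - vyx))
    (hUx : Ux = beta * (lam * (vyy + delta * Ugg) + (1 - lam) * (vxy + delta * Vgg))
        + (1 - beta) * (lam * (vyy + delta * Ugb) + (1 - lam) * (vxy + delta * Vgb)))
    (hUy : Uy = beta * (vyy + delta * Ugg)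
        + (1 - beta) * (xi * (lam * (vxy + delta * Vgb) + (1 - lam) * (vyy + delta * Ugb))
            + (1 - xi) * (vyy + delta * Ugb))) :
    Ux ≥ Uy ↔ delta * E ≥ vyy - vxy - delta * rho * (1 - p) * (1 - lam) * (vxx - vyx) := by
  obtain ⟨hl0, hl1⟩ := hlam
  obtain ⟨hb0, hb1⟩ := hbeta
  have hden : 0 < lam * (1 - beta) := mul_pos hl0 (by linarith)
  have hC : 0 < (1 - lam) - (1 - beta) * xi * lam := by
    have := (lt_div_iff₀ hden).mp hxiub
    nlinarith
  have key : Ux - Uy = ((1 - lam) - (1 - beta) * xi * lam) *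
      (delta * E - (vyy - vxy - delta * rho * (1 - p) * (1 - lam) * (vxx - vyx))) := by
    subst hVgg hVgb hUgg hUgb hUx hUy; ring
  constructor
  · intro h
    have h1 : 0 ≤ ((1 - lam) - (1 - beta) * xi * lam) *
        (delta * E - (vyy - vxy - delta * rho * (1 - p) * (1 - lam) * (vxx - vyx))) := by
      linarith [key]
    have h2 := (mul_nonneg_iff_of_pos_left hC).mp h1
    linarith
  · intro h
    have h1 := mul_nonneg hC.le (sub_nonneg.mpr h)
    linarith [key]
end

section
/- Let β, λ, ρ, δ ∈ (0,1), μ > 0, E ∈ ℝ with μ + E > 0, r ≥ 0, and ξ ∈ [0,1] with ξ < (1−λ)/(λ(1−β)). Define V_g := (1−ρλ)μ + E and V_b := μ + E. Define the bad politician's payoffs in state x: P_x := βδV_g + (1−β)[λr + (1−λ)δV_b] and P_y := β[λδV_g + (1−λ)r] + (1−β){ξ[λδV_b + (1−λ)r] + (1−ξ)r}; and in state y: P'_x := β[λr + (1−λ)δV_g] + (1−β)[λr + (1−λ)δV_b] and P'_y := βr + (1−β){ξ[λδV_b + (1−λ)r] + (1−ξ)r}. Then P_x − P_y = P'_x − P'_y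 = β(1−λ)(δV_g − r) + (1−β)[1 − λ(1+ξ)](δV_b − r), and P_x ≥ P_y if and only if r ≤ δ(μ+E) − δβρλ(1−λ)μ/(1 − λ[1 + ξ(1−β)]). -/
/-- Bad politician's decision in a PECB: state-independence and rent threshold. -/
theorem stmt7 (beta lam rho delta mu E r xi Vg Vb Px Py Px' Py' : ℝ)
    (hbeta : beta ∈ Set.Ioo (0:ℝ) 1) (hlam : lam ∈ Set.Ioo (0:ℝ) 1)
    (hrho : rho ∈ Set.Ioo (0:ℝ) 1) (hdelta : delta ∈ Set.Ioo (0:ℝ) 1)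
    (hmu : 0 < mu) (hmuE : 0 < mu + E) (hr : 0 ≤ r)
    (hxi : xi ∈ Set.Icc (0:ℝ) 1) (hxiub : xi < (1 - lam) / (lam * (1 - beta)))
    (hVg : Vg = (1 - rho * lam) * mu + E)
    (hVb : Vb = mu + E)
    (hPx : Px = beta * (delta * Vg) + (1 - beta) * (lam * r + (1 - lam) * (delta * Vb)))
    (hPy : Py = beta * (lam * (delta * Vg) + (1 - lam) * r)
        + (1 - beta) * (xi * (lam * (delta * Vb) + (1 - lam) * r) + (1 - xi) * r))
    (hPx' : Px' = beta * (lam * r + (1 - lam) * (delta * Vg))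
        + (1 - beta) * (lam * r + (1 - lam) * (delta * Vb)))
    (hPy' : Py' = beta * r
        + (1 - beta) * (xi * (lam * (delta * Vb) + (1 - lam) * r) + (1 - xi) * r)) :
    (Px - Py = beta * (1 - lam) * (delta * Vg - r)
        + (1 - beta) * (1 - lam * (1 + xi)) * (delta * Vb - r)) ∧
    (Px' - Py' = beta * (1 - lam) * (delta * Vg - r)
        + (1 - beta) * (1 - lam * (1 + xi)) * (delta * Vb - r)) ∧
    (Px ≥ Py ↔
      r ≤ delta * (mu + E)
          - delta * beta * rho * lam * (1 - lam) * mu / (1 - lam * (1 + xi * (1 - beta)))) := by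
  obtain ⟨hb0, hb1⟩ := hbeta
  obtain ⟨hl0, hl1⟩ := hlam
  have hden : 0 < lam * (1 - beta) := mul_pos hl0 (by linarith)
  have hxl : xi * (lam * (1 - beta)) < 1 - lam := (lt_div_iff₀ hden).mp hxiub
  have hD : 0 < 1 - lam * (1 + xi * (1 - beta)) := by nlinarith
  subst hVg hVb hPx hPy hPx' hPy'
  refine ⟨by ring, by ring, ?_⟩
  have hND : delta * beta * rho * lam * (1 - lam) * mu / (1 - lam * (1 + xi * (1 - beta)))
      * (1 - lam * (1 + xi * (1 - beta))) = delta * beta * rho * lam * (1 - lam) * mu :=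
    div_mul_cancel₀ _ hD.ne'
  constructor <;> intro h
  · rw [ge_iff_le, ← sub_nonneg] at h
    nlinarith [hND, mul_pos hD hD]
  · nlinarith [mul_le_mul_of_nonneg_left h hD.le, hND]
end

section
/- Let δ, β, ρ, μ > 0, λ ∈ (0,1), β < 1, E ∈ ℝ, and ξ ≥ 0 with 1 − λ[1 + ξ(1−β)] > 0 and 1 − λ(1+ξ)(1−β) > 0. Then δ(μ+E) − δβρλ(1−λ)μ/(1 − λ[1 + ξ(1−β)]) > δ(μ+E) − δβρλμ/(1 − λ(1+ξ)(1−β)) if and only if ξλ < 1 − λ. -/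
/-- Comparison of the bad politician's rent thresholds under correcting vs pandering
bureaucracy. -/
theorem stmt8 (delta beta rho mu lam E xi : ℝ)
    (hdelta : 0 < delta) (hbeta0 : 0 < beta) (hbeta1 : beta < 1)
    (hrho : 0 < rho) (hmu : 0 < mu) (hlam : lam ∈ Set.Ioo (0:ℝ) 1)
    (hxi : 0 ≤ xi)
    (hden1 : 0 < 1 - lam * (1 + xi * (1 - beta)))
    (hden2 : 0 < 1 - lam * (1 + xi) * (1 - beta)) :
    delta * (mu + E) - delta * beta * rho * lam * (1 - lam) * mu
        / (1 - lam * (1 + xi * (1 - beta)))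
      > delta * (mu + E) - delta * beta * rho * lam * mu
        / (1 - lam * (1 + xi) * (1 - beta))
    ↔ xi * lam < 1 - lam := by
  obtain ⟨hl0, hl1⟩ := hlam
  have hK : 0 < delta * beta * rho * lam * mu := by positivity
  have hKb : 0 < delta * beta * rho * lam * mu * (lam * (1 - beta)) := by
    apply mul_pos hK (mul_pos hl0 (by linarith))
  rw [gt_iff_lt, sub_lt_sub_iff_left, div_lt_div_iff₀ hden1 hden2]
  constructor
  · intro h
    nlinarith [hK, hKb]
  · intro h
    nlinarith [mul_pos hKb (show (0:ℝ) < 1 - lam - xi * lam by linarith)]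
end

section
/- Let β, λ ∈ (0,1), a > 0, and b ≥ 0. Then ((1−λ)/(λ(1−β)))·(a−b)/(a+b) + (β/(1−β))·b/(a+b) > (λ(1+β) − 1)/(λ(1−β)) if and only if λ < 2/(2+β). -/
/-- Comparison of the cutoffs Ψ̂ and Ψ̃ in NPE with a subversive bureaucracy. -/
theorem stmt11 (beta lam a b : ℝ)
    (hbeta : beta ∈ Set.Ioo (0:ℝ) 1) (hlam : lam ∈ Set.Ioo (0:ℝ) 1)
    (ha : 0 < a) (hb : 0 ≤ b) :
    ((1 - lam) / (lam * (1 - beta))) * ((a - b) / (a + b))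
        + (beta / (1 - beta)) * (b / (a + b))
      > (lam * (1 + beta) - 1) / (lam * (1 - beta))
    ↔ lam < 2 / (2 + beta) := by
  obtain ⟨hb0, hb1⟩ := hbeta
  obtain ⟨hl0, hl1⟩ := hlam
  have hab : 0 < a + b := by linarith
  have h1b : (0:ℝ) < 1 - beta := by linarith
  have hden : 0 < lam * (1 - beta) := mul_pos hl0 h1b
  have hne1 : lam ≠ 0 := ne_of_gt hl0
  have hne2 : (1 : ℝ) - beta ≠ 0 := ne_of_gt h1b
  have hne3 : a + b ≠ 0 := ne_of_gt hab
  have h2b : 0 < 2 + beta := by linarith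
  have key : ((1 - lam) / (lam * (1 - beta))) * ((a - b) / (a + b))
        + (beta / (1 - beta)) * (b / (a + b))
      - (lam * (1 + beta) - 1) / (lam * (1 - beta))
      = a * (2 - lam * (2 + beta)) / (lam * (1 - beta) * (a + b)) := by
    field_simp
    ring
  rw [gt_iff_lt, ← sub_pos, key]
  rw [div_pos_iff]
  constructor
  · rintro (⟨h1, _⟩ | ⟨_, h2⟩)
    · have : 0 < 2 - lam * (2 + beta) := by
        by_contra h
        push_neg at h
        nlinarith
      rw [lt_div_iff₀ h2b]
      linarith
    · nlinarith
  · intro h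
    left
    constructor
    · rw [lt_div_iff₀ h2b] at h
      nlinarith
    · exact mul_pos hden hab
end

section
/- Let δ ∈ (0,1], γ ∈ [0,1), ρ ∈ (0,1), and A, B > 0. Viewing ΔEU(π) := ρ(1−γ)π[(1−πδ)A + B] − ρ{[(γ−2)δπ + (1+δ)β − γ]A − γB} − [(1−γ)π + γ]B as a function of π ∈ (0,1), its derivative equals ρA{1−γ + δ[2 − γ − 2π(1−γ)]} − (1−γ)(1−ρ)B, and this derivative is strictly positive if and only if ρ > ρ_π, where ρ_π := (1−γ)B / ({1−γ + δ[2 − γ − 2π(1−γ)]}A + (1−γ)B) ∈ (0,1). -/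
/-- Derivative of the benchmark welfare difference in π, and the threshold ρ_π. -/
theorem stmt16 (delta gamma rho beta A B p D rhopi : ℝ)
    (hdelta : delta ∈ Set.Ioc (0:ℝ) 1) (hgamma : gamma ∈ Set.Ico (0:ℝ) 1)
    (hrho : rho ∈ Set.Ioo (0:ℝ) 1) (hA : 0 < A) (hB : 0 < B)
    (hp : p ∈ Set.Ioo (0:ℝ) 1)
    (hD : D = rho * A * ((1 - gamma) + delta * (2 - gamma - 2 * p * (1 - gamma)))
        - (1 - gamma) * (1 - rho) * B)
    (hrhopi : rhopi = (1 - gamma) * B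
        / (((1 - gamma) + delta * (2 - gamma - 2 * p * (1 - gamma))) * A + (1 - gamma) * B)) :
    HasDerivAt (fun q : ℝ =>
        rho * (1 - gamma) * q * ((1 - q * delta) * A + B)
          - rho * (((gamma - 2) * delta * q + (1 + delta) * beta - gamma) * A - gamma * B)
          - ((1 - gamma) * q + gamma) * B) D p ∧
    (0 < D ↔ rho > rhopi) ∧
    rhopi ∈ Set.Ioo (0:ℝ) 1 := by
  obtain ⟨hd0, hd1⟩ := hdelta
  obtain ⟨hg0, hg1⟩ := hgamma
  obtain ⟨hr0, hr1⟩ := hrho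
  obtain ⟨hp0, hp1⟩ := hp
  set K : ℝ := (1 - gamma) + delta * (2 - gamma - 2 * p * (1 - gamma)) with hK
  have hKpos : 0 < K := by
    have h1 : 2 * p * (1 - gamma) < 2 * (1 - gamma) := by nlinarith
    have h2 : 0 < 2 - gamma - 2 * p * (1 - gamma) := by nlinarith
    nlinarith
  have hSpos : 0 < K * A + (1 - gamma) * B := by nlinarith
  refine ⟨?_, ?_, ?_⟩
  · -- derivative
    have key : HasDerivAt (fun q : ℝ =>
        (-(rho * (1 - gamma) * delta * A)) * q ^ 2
          + (rho * (1 - gamma) * (A + B) - rho * (gamma - 2) * delta * A - (1 - gamma) * B) * q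
          + (-(rho * (((1 + delta) * beta - gamma) * A - gamma * B)) - gamma * B))
        ((-(rho * (1 - gamma) * delta * A)) * (2 * p ^ 1)
          + (rho * (1 - gamma) * (A + B) - rho * (gamma - 2) * delta * A - (1 - gamma) * B)) p := by
      have h1 := (hasDerivAt_pow 2 p).const_mul (-(rho * (1 - gamma) * delta * A))
      have h2 := (hasDerivAt_id p).const_mul
        (rho * (1 - gamma) * (A + B) - rho * (gamma - 2) * delta * A - (1 - gamma) * B)
      simpa using (h1.add h2).add_const
        (-(rho * (((1 + delta) * beta - gamma) * A - gamma * B)) - gamma * B)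
    convert key using 2 with q
    · ring
    · rw [hD, hK]; ring
  · -- sign iff
    rw [hrhopi, gt_iff_lt, div_lt_iff₀ hSpos, hD]
    constructor <;> intro h <;> nlinarith
  · constructor
    · rw [hrhopi]
      exact div_pos (by nlinarith) hSpos
    · rw [hrhopi, div_lt_one hSpos]
      nlinarith
end

section
/- Let δ ∈ (0,1], π ∈ (0,1), ρ ∈ (0,1), and A, B > 0. Viewing ΔEU(γ) := ρ(1−γ)π[(1−πδ)A + B] − ρ{[(γ−2)δπ + (1+δ)β − γ]A − γB} − [(1−γ)π + γ]B as a function of γ ∈ [0,1], its derivative equals (1−π){ρ(1−δπ)A − (1−ρ)B}, and this derivative is strictly positive if and only if ρ > ρ_γ, where ρ_γ := B / (B + (1−δπ)A) ∈ (0,1). -/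
/-! ΔEU is affine in γ, so its derivative is the coefficient of γ. Since 1 - π > 0, the sign of that
coefficient is the sign of ρ (1 - δπ) A - (1 - ρ) B, which is positive exactly when ρ exceeds
B / (B + (1 - δπ) A); this threshold lies in (0, 1) because both A and (1 - δπ) A are positive. -/

open Set

noncomputable section

def welfareGap (δ π ρ β A B γ : ℝ) : ℝ :=
  ρ * (1 - γ) * π * ((1 - π * δ) * A + B)
    - ρ * (((γ - 2) * δ * π + (1 + δ) * β - γ) * A - γ * B)
    - ((1 - γ) * π + γ) * B

def welfareGapSlope (δ π ρ A B : ℝ) : ℝ :=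
  (1 - π) * (ρ * (1 - δ * π) * A - (1 - ρ) * B)

theorem welfareGap_eq_slope_mul_add (δ π ρ β A B γ : ℝ) :
    welfareGap δ π ρ β A B γ = welfareGapSlope δ π ρ A B * γ + welfareGap δ π ρ β A B 0 := by
  unfold welfareGap welfareGapSlope
  ring

theorem hasDerivAt_welfareGap (δ π ρ β A B γ : ℝ) :
    HasDerivAt (welfareGap δ π ρ β A B) (welfareGapSlope δ π ρ A B) γ := by
  have hAffine : welfareGap δ π ρ β A B =
      fun g => welfareGapSlope δ π ρ A B * g + welfareGap δ π ρ β A B 0 :=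
    funext (welfareGap_eq_slope_mul_add δ π ρ β A B)
  rw [hAffine]
  simpa using ((hasDerivAt_id γ).const_mul (welfareGapSlope δ π ρ A B)).add_const
    (welfareGap δ π ρ β A B 0)

theorem mul_sub_one_sub_mul_pos_iff {a b ρ : ℝ} (hab : 0 < b + a) :
    0 < ρ * a - (1 - ρ) * b ↔ b / (b + a) < ρ := by
  rw [div_lt_iff₀ hab]
  constructor <;> intro h <;> linarith

theorem div_add_mem_Ioo {a b : ℝ} (ha : 0 < a) (hb : 0 < b) : b / (b + a) ∈ Ioo 0 1 :=
  ⟨by positivity, (div_lt_one (by positivity)).2 (by linarith)⟩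

theorem one_sub_mul_pos {δ π : ℝ} (hδ : δ ≤ 1) (hπ : π ∈ Ioo 0 1) : 0 < 1 - δ * π := by
  nlinarith [hπ.1, hπ.2]

theorem welfareGapSlope_pos_iff {δ π ρ A B : ℝ} (hδ : δ ≤ 1) (hπ : π ∈ Ioo 0 1) (hA : 0 < A)
    (hB : 0 < B) : 0 < welfareGapSlope δ π ρ A B ↔ B / (B + (1 - δ * π) * A) < ρ := by
  have hCost : 0 < (1 - δ * π) * A := mul_pos (one_sub_mul_pos hδ hπ) hA
  rw [welfareGapSlope, mul_pos_iff_of_pos_left (sub_pos.2 hπ.2), ← mul_sub_one_sub_mul_pos_iff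
    (by linarith), mul_assoc]

end

theorem stmt17_general (delta p rho beta A B gamma D rhogamma : ℝ)
    (hdelta : delta ∈ Set.Ioc (0:ℝ) 1) (hp : p ∈ Set.Ioo (0:ℝ) 1)
    (hA : 0 < A) (hB : 0 < B)
    (hD : D = (1 - p) * (rho * (1 - delta * p) * A - (1 - rho) * B))
    (hrhogamma : rhogamma = B / (B + (1 - delta * p) * A)) :
    HasDerivAt (fun g : ℝ =>
        rho * (1 - g) * p * ((1 - p * delta) * A + B)
          - rho * (((g - 2) * delta * p + (1 + delta) * beta - g) * A - g * B)
          - ((1 - g) * p + g) * B) D gamma ∧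
    (0 < D ↔ rho > rhogamma) ∧
    rhogamma ∈ Set.Ioo (0:ℝ) 1 := by
  subst hD hrhogamma
  exact ⟨hasDerivAt_welfareGap delta p rho beta A B gamma,
    welfareGapSlope_pos_iff hdelta.2 hp hA hB,
    div_add_mem_Ioo (mul_pos (one_sub_mul_pos hdelta.2 hp) hA) hB⟩

/-- Derivative of the benchmark welfare difference in γ, and the threshold ρ_γ. -/
theorem stmt17 (delta p rho beta A B gamma D rhogamma : ℝ)
    (hdelta : delta ∈ Set.Ioc (0:ℝ) 1) (hp : p ∈ Set.Ioo (0:ℝ) 1)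
    (hrho : rho ∈ Set.Ioo (0:ℝ) 1) (hA : 0 < A) (hB : 0 < B)
    (hgamma : gamma ∈ Set.Icc (0:ℝ) 1)
    (hD : D = (1 - p) * (rho * (1 - delta * p) * A - (1 - rho) * B))
    (hrhogamma : rhogamma = B / (B + (1 - delta * p) * A)) :
    HasDerivAt (fun g : ℝ =>
        rho * (1 - g) * p * ((1 - p * delta) * A + B)
          - rho * (((g - 2) * delta * p + (1 + delta) * beta - g) * A - g * B)
          - ((1 - g) * p + g) * B) D gamma ∧
    (0 < D ↔ rho > rhogamma) ∧
    rhogamma ∈ Set.Ioo (0:ℝ) 1 :=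
  stmt17_general delta p rho beta A B gamma D rhogamma hdelta hp hA hB hD hrhogamma
end

section
/- Let π, β, ρ ∈ (0,1) and E ∈ (0,1). Define ℓ := 1 − (1−E)/(ρ(1−π)) and D(λ) := π(1−ρ)(1−λ)·{(1−λ)(1−π)ρ − 1 + ((1−π)/2)(1−β)λρ[1 + πρ(1−λ)]E}. Then D(ℓ) < 0; equivalently, (1−β)(1−πE)[ρ(1−π) − 1 + E] < 2(1−π). -/
/-- The welfare jump when bureaucratic influence shifts the equilibrium from PECB
to NPE-SF: the PECB-minus-NPE welfare difference is negative at the threshold ℓ. -/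
theorem stmt18 (p beta rho E ell : ℝ) (D : ℝ → ℝ)
    (hp : p ∈ Set.Ioo (0:ℝ) 1) (hbeta : beta ∈ Set.Ioo (0:ℝ) 1)
    (hrho : rho ∈ Set.Ioo (0:ℝ) 1) (hE : E ∈ Set.Ioo (0:ℝ) 1)
    (hell : ell = 1 - (1 - E) / (rho * (1 - p)))
    (hD : ∀ lam : ℝ, D lam = p * (1 - rho) * (1 - lam) *
        ((1 - lam) * (1 - p) * rho - 1
          + ((1 - p) / 2) * (1 - beta) * lam * rho * (1 + p * rho * (1 - lam)) * E)) :
    D ell < 0 ∧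
    (1 - beta) * (1 - p * E) * (rho * (1 - p) - 1 + E) < 2 * (1 - p) := by
  obtain ⟨hp0, hp1⟩ := hp
  obtain ⟨hb0, hb1⟩ := hbeta
  obtain ⟨hr0, hr1⟩ := hrho
  obtain ⟨hE0, hE1⟩ := hE
  have hr' : (0:ℝ) < rho * (1 - p) := mul_pos hr0 (by linarith)
  have h1e : (1 - ell) * (1 - p) * rho = 1 - E := by
    rw [hell]
    field_simp
    ring
  have hell1 : 0 < 1 - ell := by
    have := div_pos (by linarith : (0:ℝ) < 1 - E) hr'
    rw [hell]; linarith
  have hC : ((1 - p) / 2) * (1 - beta) * ell * rho * (1 + p * rho * (1 - ell)) < 1 := by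
    have hYpos : 0 < 1 + p * rho * (1 - ell) := by positivity
    rcases le_or_gt ell 0 with h | h
    · have hA : 0 < ((1 - p) / 2) * (1 - beta) * rho * (1 + p * rho * (1 - ell)) := by
        have : (0:ℝ) < (1 - p) / 2 := by linarith
        have : (0:ℝ) < 1 - beta := by linarith
        positivity
      nlinarith [mul_nonneg (le_of_lt hA) (neg_nonneg.mpr h)]
    · have hell2 : ell < 1 := by linarith
      have hX : ((1 - p) / 2) * (1 - beta) * ell * rho < 1 / 2 := by
        nlinarith [mul_pos h hr0, mul_pos hb0 (mul_pos h hr0),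
          mul_pos hp0 (mul_pos h hr0)]
      have hXpos : 0 < ((1 - p) / 2) * (1 - beta) * ell * rho := by
        have : (0:ℝ) < 1 - p := by linarith
        have : (0:ℝ) < 1 - beta := by linarith
        positivity
      have hY : 1 + p * rho * (1 - ell) < 2 := by
        nlinarith [mul_pos hp0 hr0]
      nlinarith [mul_lt_mul_of_pos_left hY hXpos]
  have hDell : D ell < 0 := by
    rw [hD ell]
    have hB : (1 - ell) * (1 - p) * rho - 1
        + ((1 - p) / 2) * (1 - beta) * ell * rho * (1 + p * rho * (1 - ell)) * E < 0 := by
      rw [h1e]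
      nlinarith [hC, hE0]
    have hpos : 0 < p * (1 - rho) * (1 - ell) := by
      have : (0:ℝ) < 1 - rho := by linarith
      positivity
    exact mul_neg_of_pos_of_neg hpos hB
  refine ⟨hDell, ?_⟩
  rcases le_or_gt (rho * (1 - p) - 1 + E) 0 with h | h
  · have h1 : 0 ≤ (1 - beta) * (1 - p * E) := by
      have : p * E < 1 := by nlinarith
      nlinarith
    nlinarith [mul_nonpos_of_nonneg_of_nonpos h1 h]
  · have h1 : (1 - beta) * (1 - p * E) < 1 := by nlinarith [mul_pos hp0 hE0]
    have h2 : rho * (1 - p) - 1 + E < 1 - p := by nlinarith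
    have h1p : 0 < (1 - beta) * (1 - p * E) := by
      have : p * E < 1 := by nlinarith
      nlinarith
    have h3 : (1 - beta) * (1 - p * E) * (rho * (1 - p) - 1 + E)
        < 1 * (rho * (1 - p) - 1 + E) := mul_lt_mul_of_pos_right h1 h
    linarith
end
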